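/- Let ρ(x,y) = (1/(2√2))·Λ₀₀₀ + x·Λ₁₂₂ + x·Λ₂₁₂ + y·Λ₃₃₀ with x, y real. Then ρ(x,y) is Hermitian with trace 1 and tr(ρ(x,y)²) = 1/8 + 2x² + y². Moreover ρ(x,y) is positive semidefinite if and only if 1 − 2√2·y ≥ 0, 1 + 2√2·(y + 2x) ≥ 0 and 1 + 2√2·(y − 2x) ≥ 0; and the partial transpose ρ(x,y)^{T₁} is positive semidefinite if and only if 1 + 2√2·y ≥ 0, 1 − 2√2·(y + 2x) ≥ 0 and 1 − 2√2·(y − 2x) ≥ 0. -/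

import Mathlib

/-! With `P = σ₁ ⊗ σ₂ ⊗ σ₂` and `Q = σ₂ ⊗ σ₁ ⊗ σ₂` one has `PQ = σ₃ ⊗ σ₃ ⊗ 1`, so
`ρ = 1/8 + (√2 x / 4) (P + Q) + (√2 y / 4) PQ`, where `P`, `Q` are commuting Hermitian
involutions and `P`, `Q`, `PQ` are traceless. Hence the joint eigenprojections
`E s t = (1 + sP)(1 + tQ)/4` (`s, t = ±1`) are orthogonal projections of trace `8/4 = 2` summing to
`1`, and `ρ` acts on the range of `E s t` as the scalar `1/8 + (√2 x / 4)(s + t) + (√2 y / 4) st`: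
`ρ ⪰ 0` iff these four numbers are nonnegative. Transposing the first qubit fixes `σ₁`, `σ₃` and
negates `σ₂`, so `ρ^{T₁}` has the same shape with `Q` replaced by `-Q` and the sign of the `PQ`
coefficient flipped. -/

open Matrix Kronecker ComplexOrder

noncomputable def lam : Fin 4 → Matrix (Fin 2) (Fin 2) ℂ
  | 0 => ((Real.sqrt 2 : ℂ))⁻¹ • !![1, 0; 0, 1]
  | 1 => ((Real.sqrt 2 : ℂ))⁻¹ • !![0, 1; 1, 0]
  | 2 => ((Real.sqrt 2 : ℂ))⁻¹ • !![0, -Complex.I; Complex.I, 0]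
  | 3 => ((Real.sqrt 2 : ℂ))⁻¹ • !![1, 0; 0, -1]

/-- `Λ_{jkl} = λ_j ⊗ λ_k ⊗ λ_l`. -/
noncomputable def Lam3 (j k l : Fin 4) :
    Matrix (Fin 2 × Fin 2 × Fin 2) (Fin 2 × Fin 2 × Fin 2) ℂ :=
  lam j ⊗ₖ (lam k ⊗ₖ lam l)

/-- Partial transpose on the first qubit. -/
def PT1 (ρ : Matrix (Fin 2 × Fin 2 × Fin 2) (Fin 2 × Fin 2 × Fin 2) ℂ) :
    Matrix (Fin 2 × Fin 2 × Fin 2) (Fin 2 × Fin 2 × Fin 2) ℂ :=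
  Matrix.of fun p q => ρ (q.1, p.2) (p.1, q.2)

/-- The state `ρ_{AB-C}(x,y)` of Section V of the paper. -/
noncomputable def rhoABC (x y : ℝ) :
    Matrix (Fin 2 × Fin 2 × Fin 2) (Fin 2 × Fin 2 × Fin 2) ℂ :=
  ((1 / (2 * Real.sqrt 2) : ℝ) : ℂ) • Lam3 0 0 0 +
    (x : ℂ) • Lam3 1 2 2 + (x : ℂ) • Lam3 2 1 2 + (y : ℂ) • Lam3 3 3 0

section

variable {n : Type*} [Fintype n] [DecidableEq n]

structure IsPauliPair (P Q : Matrix n n ℂ) : Prop where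
  isHermitian_left : P.IsHermitian
  isHermitian_right : Q.IsHermitian
  mul_self_left : P * P = 1
  mul_self_right : Q * Q = 1
  commute : P * Q = Q * P
  trace_left : P.trace = 0
  trace_right : Q.trace = 0
  trace_mul : (P * Q).trace = 0

noncomputable def pauliComb (P Q : Matrix n n ℂ) (a b c d : ℝ) : Matrix n n ℂ :=
  a • 1 + b • P + c • Q + d • (P * Q)

noncomputable def pauliProj (P Q : Matrix n n ℂ) (s t : ℝ) : Matrix n n ℂ :=
  pauliComb P Q (1 / 4) (s / 4) (t / 4) (s * t / 4)

variable {P Q : Matrix n n ℂ}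

theorem pauliComb_add (a b c d a' b' c' d' : ℝ) :
    pauliComb P Q a b c d + pauliComb P Q a' b' c' d' =
      pauliComb P Q (a + a') (b + b') (c + c') (d + d') := by
  simp only [pauliComb]
  module

theorem smul_pauliComb (r a b c d : ℝ) :
    r • pauliComb P Q a b c d = pauliComb P Q (r * a) (r * b) (r * c) (r * d) := by
  simp only [pauliComb]
  module

theorem pauliComb_eq_sum_pauliProj (a b c d : ℝ) :
    pauliComb P Q a b c d =
      (a + b + c + d) • pauliProj P Q 1 1 + (a + b - c - d) • pauliProj P Q 1 (-1) +
        (a - b + c - d) • pauliProj P Q (-1) 1 + (a - b - c + d) • pauliProj P Q (-1) (-1) := by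
  simp only [pauliProj, smul_pauliComb, pauliComb_add]
  congr 1 <;> ring

namespace IsPauliPair

theorem neg_right (h : IsPauliPair P Q) : IsPauliPair P (-Q) where
  isHermitian_left := h.isHermitian_left
  isHermitian_right := h.isHermitian_right.neg
  mul_self_left := h.mul_self_left
  mul_self_right := by rw [neg_mul_neg, h.mul_self_right]
  commute := by rw [mul_neg, neg_mul, h.commute]
  trace_left := h.trace_left
  trace_right := by rw [trace_neg, h.trace_right, neg_zero]
  trace_mul := by rw [mul_neg, trace_neg, h.trace_mul, neg_zero]

variable (h : IsPauliPair P Q)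
include h

theorem pauliComb_mul_pauliComb (a b c d a' b' c' d' : ℝ) :
    pauliComb P Q a b c d * pauliComb P Q a' b' c' d' =
      pauliComb P Q (a * a' + b * b' + c * c' + d * d') (a * b' + b * a' + c * d' + d * c')
        (a * c' + c * a' + b * d' + d * b') (a * d' + d * a' + b * c' + c * b') := by
  have hPPQ : P * (P * Q) = Q := by rw [← mul_assoc, h.mul_self_left, one_mul]
  have hPQQ : P * Q * Q = P := by rw [mul_assoc, h.mul_self_right, mul_one]
  have hPQP : P * Q * P = Q := by rw [h.commute, mul_assoc, h.mul_self_left, mul_one]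
  have hQPQ : Q * (P * Q) = P := by rw [h.commute, ← mul_assoc, h.mul_self_right, one_mul]
  have hPQPQ : P * Q * (P * Q) = 1 := by rw [← mul_assoc, hPQP, h.mul_self_right]
  simp only [pauliComb, add_mul, mul_add, Matrix.smul_mul, Matrix.mul_smul, smul_smul, one_mul,
    mul_one, h.mul_self_left, h.mul_self_right, ← h.commute, hPPQ, hPQQ, hPQP, hQPQ, hPQPQ]
  module

theorem isHermitian_pauliComb (a b c d : ℝ) : (pauliComb P Q a b c d).IsHermitian := by
  have hPQ : (P * Q).IsHermitian := by
    rw [IsHermitian, conjTranspose_mul, h.isHermitian_left.eq, h.isHermitian_right.eq, h.commute]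
  exact ((((isHermitian_one (n := n)).smul (.all a)).add (h.isHermitian_left.smul (.all b))).add
    (h.isHermitian_right.smul (.all c))).add (hPQ.smul (.all d))

theorem isHermitian_pauliProj (s t : ℝ) : (pauliProj P Q s t).IsHermitian :=
  h.isHermitian_pauliComb _ _ _ _

theorem trace_pauliComb (a b c d : ℝ) :
    (pauliComb P Q a b c d).trace = a * Fintype.card n := by
  simp [pauliComb, h.trace_left, h.trace_right, h.trace_mul, Complex.real_smul]

theorem trace_pauliProj (s t : ℝ) : (pauliProj P Q s t).trace = Fintype.card n / 4 := by
  rw [pauliProj, h.trace_pauliComb]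
  push_cast
  ring

theorem trace_pauliComb_mul_self (a b c d : ℝ) :
    (pauliComb P Q a b c d * pauliComb P Q a b c d).trace =
      (a ^ 2 + b ^ 2 + c ^ 2 + d ^ 2 : ℝ) * Fintype.card n := by
  rw [h.pauliComb_mul_pauliComb, h.trace_pauliComb]
  ring_nf

section
variable {s t : ℝ} (hs : s ^ 2 = 1) (ht : t ^ 2 = 1)
include hs ht

theorem pauliComb_mul_pauliProj (a b c d : ℝ) :
    pauliComb P Q a b c d * pauliProj P Q s t =
      (a + b * s + c * t + d * s * t) • pauliProj P Q s t := by
  rw [pauliProj, h.pauliComb_mul_pauliComb, smul_pauliComb]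
  congr 1
  · ring
  · linear_combination (-(b + d * t) / 4) * hs
  · linear_combination (-(c + d * s) / 4) * ht
  · linear_combination (-(b * t + d) / 4) * hs - (c * s + d * s ^ 2) / 4 * ht

theorem pauliProj_mul_self : pauliProj P Q s t * pauliProj P Q s t = pauliProj P Q s t := by
  refine (h.pauliComb_mul_pauliProj hs ht _ _ _ _).trans ?_
  rw [show 1 / 4 + s / 4 * s + t / 4 * t + s * t / 4 * s * t = (1 : ℝ) by
    linear_combination (1 + t ^ 2) / 4 * hs + ht / 2, one_smul]

theorem posSemidef_pauliProj : (pauliProj P Q s t).PosSemidef := by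
  rw [← h.pauliProj_mul_self hs ht]
  nth_rewrite 1 [← (h.isHermitian_pauliProj s t).eq]
  exact posSemidef_conjTranspose_mul_self _

theorem nonneg_of_posSemidef_pauliComb [Nonempty n] {a b c d : ℝ}
    (hM : (pauliComb P Q a b c d).PosSemidef) : 0 ≤ a + b * s + c * t + d * s * t := by
  set E := pauliProj P Q s t
  have hEME : (Eᴴ * pauliComb P Q a b c d * E).trace =
      ((a + b * s + c * t + d * s * t) * (Fintype.card n / 4) : ℝ) := by
    rw [(h.isHermitian_pauliProj s t).eq, mul_assoc, h.pauliComb_mul_pauliProj hs ht, mul_smul_comm,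
      h.pauliProj_mul_self hs ht, trace_smul, h.trace_pauliProj, Complex.real_smul]
    push_cast
    ring
  have htr := (hM.conjTranspose_mul_mul_same E).trace_nonneg
  rw [hEME, Complex.zero_le_real] at htr
  exact nonneg_of_mul_nonneg_left htr (by positivity)

end

theorem posSemidef_pauliComb_iff [Nonempty n] (a b c d : ℝ) :
    (pauliComb P Q a b c d).PosSemidef ↔
      0 ≤ a + b + c + d ∧ 0 ≤ a + b - c - d ∧ 0 ≤ a - b + c - d ∧ 0 ≤ a - b - c + d := by
  have one_sq : (1 : ℝ) ^ 2 = 1 := one_pow 2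
  have neg_one_sq : (-1 : ℝ) ^ 2 = 1 := neg_one_sq
  constructor
  · intro hM
    have h₁ := h.nonneg_of_posSemidef_pauliComb one_sq one_sq hM
    have h₂ := h.nonneg_of_posSemidef_pauliComb one_sq neg_one_sq hM
    have h₃ := h.nonneg_of_posSemidef_pauliComb neg_one_sq one_sq hM
    have h₄ := h.nonneg_of_posSemidef_pauliComb neg_one_sq neg_one_sq hM
    refine ⟨?_, ?_, ?_, ?_⟩ <;> linarith
  · rintro ⟨h₁, h₂, h₃, h₄⟩
    rw [pauliComb_eq_sum_pauliProj]
    exact (((h.posSemidef_pauliProj one_sq one_sq).smul h₁).add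
      ((h.posSemidef_pauliProj one_sq neg_one_sq).smul h₂)).add
      ((h.posSemidef_pauliProj neg_one_sq one_sq).smul h₃) |>.add
      ((h.posSemidef_pauliProj neg_one_sq neg_one_sq).smul h₄)

end IsPauliPair
end

def pauli : Fin 4 → Matrix (Fin 2) (Fin 2) ℂ
  | 0 => !![1, 0; 0, 1]
  | 1 => !![0, 1; 1, 0]
  | 2 => !![0, -Complex.I; Complex.I, 0]
  | 3 => !![1, 0; 0, -1]

theorem lam_eq_smul_pauli (j : Fin 4) : lam j = (Real.sqrt 2 : ℂ)⁻¹ • pauli j := by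
  fin_cases j <;> rfl

theorem pauli_zero : pauli 0 = 1 := one_fin_two.symm

theorem pauli_mul_self (j : Fin 4) : pauli j * pauli j = 1 := by
  fin_cases j <;> ext a b <;> fin_cases a <;> fin_cases b <;> simp [pauli]

theorem isHermitian_pauli (j : Fin 4) : (pauli j).IsHermitian := by
  fin_cases j <;> ext a b <;> fin_cases a <;> fin_cases b <;> simp [pauli]

theorem trace_pauli {j : Fin 4} (hj : j ≠ 0) : (pauli j).trace = 0 := by
  fin_cases j <;> simp_all [pauli]

theorem pauli_one_mul_pauli_two : pauli 1 * pauli 2 = Complex.I • pauli 3 := by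
  ext a b; fin_cases a <;> fin_cases b <;> simp [pauli]

theorem pauli_two_mul_pauli_one : pauli 2 * pauli 1 = -Complex.I • pauli 3 := by
  ext a b; fin_cases a <;> fin_cases b <;> simp [pauli]

theorem transpose_pauli_two : (pauli 2)ᵀ = -pauli 2 := by
  ext a b; fin_cases a <;> fin_cases b <;> simp [pauli]

theorem transpose_pauli {j : Fin 4} (hj : j ≠ 2) : (pauli j)ᵀ = pauli j := by
  fin_cases j <;> simp_all [pauli, ← Matrix.ext_iff, Fin.forall_fin_two]

def pauli3 (j k l : Fin 4) : Matrix (Fin 2 × Fin 2 × Fin 2) (Fin 2 × Fin 2 × Fin 2) ℂ :=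
  pauli j ⊗ₖ (pauli k ⊗ₖ pauli l)

theorem pauli3_zero : pauli3 0 0 0 = 1 := by
  simp only [pauli3, pauli_zero, one_kronecker_one]

theorem pauli3_mul_self (j k l : Fin 4) : pauli3 j k l * pauli3 j k l = 1 := by
  simp only [pauli3, ← mul_kronecker_mul, pauli_mul_self, one_kronecker_one]

theorem isHermitian_pauli3 (j k l : Fin 4) : (pauli3 j k l).IsHermitian := by
  simp only [IsHermitian, pauli3, conjTranspose_kronecker, (isHermitian_pauli _).eq]

theorem trace_pauli3 {j : Fin 4} (hj : j ≠ 0) (k l : Fin 4) : (pauli3 j k l).trace = 0 := by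
  rw [pauli3, trace_kronecker, trace_pauli hj, zero_mul]

theorem pauli3_xyy_mul_pauli3_yxy : pauli3 1 2 2 * pauli3 2 1 2 = pauli3 3 3 0 := by
  simp only [pauli3, ← mul_kronecker_mul, pauli_one_mul_pauli_two, pauli_two_mul_pauli_one,
    pauli_mul_self, pauli_zero, smul_kronecker, kronecker_smul, smul_smul]
  simp

theorem pauli3_yxy_mul_pauli3_xyy : pauli3 2 1 2 * pauli3 1 2 2 = pauli3 3 3 0 := by
  simp only [pauli3, ← mul_kronecker_mul, pauli_one_mul_pauli_two, pauli_two_mul_pauli_one,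
    pauli_mul_self, pauli_zero, smul_kronecker, kronecker_smul, smul_smul]
  simp

theorem isPauliPair_pauli3 : IsPauliPair (pauli3 1 2 2) (pauli3 2 1 2) where
  isHermitian_left := isHermitian_pauli3 _ _ _
  isHermitian_right := isHermitian_pauli3 _ _ _
  mul_self_left := pauli3_mul_self _ _ _
  mul_self_right := pauli3_mul_self _ _ _
  commute := pauli3_xyy_mul_pauli3_yxy.trans pauli3_yxy_mul_pauli3_xyy.symm
  trace_left := trace_pauli3 (by decide) _ _
  trace_right := trace_pauli3 (by decide) _ _
  trace_mul := pauli3_xyy_mul_pauli3_yxy ▸ trace_pauli3 (by decide) _ _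

theorem Lam3_eq_smul_pauli3 (j k l : Fin 4) : Lam3 j k l = (Real.sqrt 2 / 4) • pauli3 j k l := by
  have h2 : (Real.sqrt 2 : ℂ) ^ 2 = 2 := by norm_cast; simp
  simp only [Lam3, pauli3, lam_eq_smul_pauli, kronecker_smul, smul_kronecker, smul_smul]
  rw [← Complex.coe_smul]
  congr 1
  push_cast
  field_simp
  linear_combination (-(Real.sqrt 2 : ℂ) ^ 2 - 2) * h2

theorem PT1_add (A B : Matrix (Fin 2 × Fin 2 × Fin 2) (Fin 2 × Fin 2 × Fin 2) ℂ) :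
    PT1 (A + B) = PT1 A + PT1 B := rfl

theorem PT1_smul (r : ℝ) (A : Matrix (Fin 2 × Fin 2 × Fin 2) (Fin 2 × Fin 2 × Fin 2) ℂ) :
    PT1 (r • A) = r • PT1 A := rfl

theorem PT1_kronecker (A : Matrix (Fin 2) (Fin 2) ℂ)
    (B : Matrix (Fin 2 × Fin 2) (Fin 2 × Fin 2) ℂ) :
    PT1 (A ⊗ₖ B) = Aᵀ ⊗ₖ B := rfl

theorem PT1_pauli3 {j : Fin 4} (hj : j ≠ 2) (k l : Fin 4) :
    PT1 (pauli3 j k l) = pauli3 j k l := by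
  rw [pauli3, PT1_kronecker, transpose_pauli hj]

theorem PT1_pauli3_two (k l : Fin 4) : PT1 (pauli3 2 k l) = -pauli3 2 k l := by
  rw [pauli3, PT1_kronecker, transpose_pauli_two, ← neg_one_smul ℂ (pauli 2), smul_kronecker,
    neg_one_smul]

theorem rhoABC_eq_pauliComb (x y : ℝ) :
    rhoABC x y = pauliComb (pauli3 1 2 2) (pauli3 2 1 2)
      (1 / 8) (Real.sqrt 2 * x / 4) (Real.sqrt 2 * x / 4) (Real.sqrt 2 * y / 4) := by
  simp only [rhoABC, pauliComb, Lam3_eq_smul_pauli3, pauli3_zero, pauli3_xyy_mul_pauli3_yxy,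
    Complex.coe_smul, smul_smul]
  match_scalars <;> field_simp
  norm_num

theorem PT1_rhoABC_eq_pauliComb (x y : ℝ) :
    PT1 (rhoABC x y) = pauliComb (pauli3 1 2 2) (-pauli3 2 1 2)
      (1 / 8) (Real.sqrt 2 * x / 4) (Real.sqrt 2 * x / 4) (-(Real.sqrt 2 * y / 4)) := by
  rw [rhoABC_eq_pauliComb, pauliComb, pauliComb, mul_neg, pauli3_xyy_mul_pauli3_yxy,
    ← pauli3_zero]
  simp only [PT1_add, PT1_smul, PT1_pauli3_two, PT1_pauli3 (j := 0) (by decide),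
    PT1_pauli3 (j := 1) (by decide), PT1_pauli3 (j := 3) (by decide)]
  module

theorem stmt_18 (x y : ℝ) :
    (rhoABC x y).IsHermitian ∧ (rhoABC x y).trace = 1 ∧
    (rhoABC x y * rhoABC x y).trace = 1 / 8 + (2 : ℂ) * (x : ℂ) ^ 2 + (y : ℂ) ^ 2 ∧
    ((rhoABC x y).PosSemidef ↔
      0 ≤ 1 - 2 * Real.sqrt 2 * y ∧ 0 ≤ 1 + 2 * Real.sqrt 2 * (y + 2 * x) ∧
        0 ≤ 1 + 2 * Real.sqrt 2 * (y - 2 * x)) ∧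
    ((PT1 (rhoABC x y)).PosSemidef ↔
      0 ≤ 1 + 2 * Real.sqrt 2 * y ∧ 0 ≤ 1 - 2 * Real.sqrt 2 * (y + 2 * x) ∧
        0 ≤ 1 - 2 * Real.sqrt 2 * (y - 2 * x)) := by
  have h := isPauliPair_pauli3
  refine ⟨?_, ?_, ?_, ?_, ?_⟩
  · rw [rhoABC_eq_pauliComb]
    exact h.isHermitian_pauliComb _ _ _ _
  · rw [rhoABC_eq_pauliComb, h.trace_pauliComb]
    norm_num
  · rw [rhoABC_eq_pauliComb, h.trace_pauliComb_mul_self]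
    have hsqrt : Real.sqrt 2 ^ 2 = 2 := Real.sq_sqrt zero_le_two
    have hsum : (1 / 8) ^ 2 + (Real.sqrt 2 * x / 4) ^ 2 + (Real.sqrt 2 * x / 4) ^ 2 +
        (Real.sqrt 2 * y / 4) ^ 2 = (1 / 8 + 2 * x ^ 2 + y ^ 2) / 8 := by
      linear_combination (x ^ 2 / 8 + y ^ 2 / 16) * hsqrt
    rw [hsum]
    push_cast
    norm_num
  · rw [rhoABC_eq_pauliComb, h.posSemidef_pauliComb_iff]
    constructor
    · rintro ⟨h₁, h₂, -, h₄⟩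
      refine ⟨?_, ?_, ?_⟩ <;> linarith
    · rintro ⟨h₁, h₂, h₃⟩
      refine ⟨?_, ?_, ?_, ?_⟩ <;> linarith
  · rw [PT1_rhoABC_eq_pauliComb, h.neg_right.posSemidef_pauliComb_iff]
    constructor
    · rintro ⟨h₁, h₂, -, h₄⟩
      refine ⟨?_, ?_, ?_⟩ <;> linarith
    · rintro ⟨h₁, h₂, h₃⟩
      refine ⟨?_, ?_, ?_, ?_⟩ <;> linarith
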